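/- Let c : ℝ → ℝ be a smooth function with κ⁻¹ ≤ c(u) ≤ κ for all u ∈ ℝ, for some κ > 1. Let (u,w,z,p,q) be continuously differentiable functions on an open set Ω ⊂ ℝ² (variables (X,Y)) satisfying the semilinear system (S). Then on Ω: ∂_Y[(1 + cos w) p / 4] = (c'(u) p q/(32 c²(u))) [sin z − sin w + sin(z − w)] = ∂_X[−(1 + cos z) q / 4]; in particular the 1-form ((1 + cos w)p/4) dX − ((1 + cos z)q/4) dY (the differential dx of the original space variable) is closed. -/

import Mathlib

open Real

/-- Partial derivative in the first variable (`X`). -/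
noncomputable def pdX (f : ℝ → ℝ → ℝ) (X Y : ℝ) : ℝ := deriv (fun X' => f X' Y) X

/-- Partial derivative in the second variable (`Y`). -/
noncomputable def pdY (f : ℝ → ℝ → ℝ) (X Y : ℝ) : ℝ := deriv (fun Y' => f X Y') Y

/-- The semilinear system (S) of the paper, in the variables `(X,Y)`,
for the functions `(u, w, z, p, q)`. -/
def SysS (c : ℝ → ℝ) (Ω : Set (ℝ × ℝ)) (u w z p q : ℝ → ℝ → ℝ) : Prop :=
  ∀ X Y : ℝ, (X, Y) ∈ Ω →
    pdY w X Y = deriv c (u X Y) / (8 * c (u X Y) ^ 2)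
        * (Real.cos (z X Y) - Real.cos (w X Y)) * q X Y
    ∧ pdX z X Y = deriv c (u X Y) / (8 * c (u X Y) ^ 2)
        * (Real.cos (w X Y) - Real.cos (z X Y)) * p X Y
    ∧ pdY p X Y = deriv c (u X Y) / (8 * c (u X Y) ^ 2)
        * (Real.sin (z X Y) - Real.sin (w X Y)) * (p X Y * q X Y)
    ∧ pdX q X Y = deriv c (u X Y) / (8 * c (u X Y) ^ 2)
        * (Real.sin (w X Y) - Real.sin (z X Y)) * (p X Y * q X Y)
    ∧ pdX u X Y = Real.sin (w X Y) / (4 * c (u X Y)) * p X Y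
    ∧ pdY u X Y = Real.sin (z X Y) / (4 * c (u X Y)) * q X Y

lemma sliceY (f : ℝ → ℝ → ℝ) (Ω : Set (ℝ × ℝ)) (hΩ : IsOpen Ω)
    (hf : ContDiffOn ℝ 1 (fun pt : ℝ × ℝ => f pt.1 pt.2) Ω)
    {X Y : ℝ} (hXY : (X, Y) ∈ Ω) :
    HasDerivAt (fun Y' => f X Y') (pdY f X Y) Y := by
  have h1 : DifferentiableAt ℝ (fun pt : ℝ × ℝ => f pt.1 pt.2) (X, Y) :=
    (hf.contDiffAt (hΩ.mem_nhds hXY)).differentiableAt one_ne_zero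
  have h2 : DifferentiableAt ℝ (fun Y' : ℝ => (X, Y')) Y :=
    (differentiableAt_const X).prodMk differentiableAt_id
  have : DifferentiableAt ℝ (fun Y' => f X Y') Y := h1.comp Y h2
  exact this.hasDerivAt

lemma sliceX (f : ℝ → ℝ → ℝ) (Ω : Set (ℝ × ℝ)) (hΩ : IsOpen Ω)
    (hf : ContDiffOn ℝ 1 (fun pt : ℝ × ℝ => f pt.1 pt.2) Ω)
    {X Y : ℝ} (hXY : (X, Y) ∈ Ω) :
    HasDerivAt (fun X' => f X' Y) (pdX f X Y) X := by
  have h1 : DifferentiableAt ℝ (fun pt : ℝ × ℝ => f pt.1 pt.2) (X, Y) :=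
    (hf.contDiffAt (hΩ.mem_nhds hXY)).differentiableAt one_ne_zero
  have h2 : DifferentiableAt ℝ (fun X' : ℝ => (X', Y)) X :=
    differentiableAt_id.prodMk (differentiableAt_const Y)
  have : DifferentiableAt ℝ (fun X' => f X' Y) X := h1.comp (g := fun pt : ℝ × ℝ => f pt.1 pt.2) X h2
  exact this.hasDerivAt

/-- for a `C¹` solution of the system (S) on an open set `Ω`,
`∂_Y[(1 + cos w)p/4] = (c' p q/(32c²))[sin z - sin w + sin(z - w)]
 = ∂_X[-(1 + cos z)q/4]`, i.e. the 1-form `((1+cos w)p/4)dX - ((1+cos z)q/4)dY`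
(the differential `dx` of the original space variable) is closed. -/
theorem stmt16
    (c : ℝ → ℝ) (κ : ℝ) (hκ : 1 < κ) (hc : ContDiff ℝ (⊤ : ℕ∞) c)
    (hcb : ∀ v : ℝ, κ⁻¹ ≤ c v ∧ c v ≤ κ)
    (Ω : Set (ℝ × ℝ)) (hΩ : IsOpen Ω)
    (u w z p q : ℝ → ℝ → ℝ)
    (hu : ContDiffOn ℝ 1 (fun pt : ℝ × ℝ => u pt.1 pt.2) Ω)
    (hw : ContDiffOn ℝ 1 (fun pt : ℝ × ℝ => w pt.1 pt.2) Ω)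
    (hz : ContDiffOn ℝ 1 (fun pt : ℝ × ℝ => z pt.1 pt.2) Ω)
    (hp : ContDiffOn ℝ 1 (fun pt : ℝ × ℝ => p pt.1 pt.2) Ω)
    (hq : ContDiffOn ℝ 1 (fun pt : ℝ × ℝ => q pt.1 pt.2) Ω)
    (hsys : SysS c Ω u w z p q) :
    ∀ X Y : ℝ, (X, Y) ∈ Ω →
      pdY (fun a b => (1 + Real.cos (w a b)) * p a b / 4) X Y
          = deriv c (u X Y) * (p X Y * q X Y) / (32 * c (u X Y) ^ 2)
              * (Real.sin (z X Y) - Real.sin (w X Y) + Real.sin (z X Y - w X Y))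
      ∧ pdY (fun a b => (1 + Real.cos (w a b)) * p a b / 4) X Y
          = pdX (fun a b => - ((1 + Real.cos (z a b)) * q a b / 4)) X Y := by
  intro X Y hXY
  obtain ⟨hw1, hz1, hp1, hq1, hu1, hu2⟩ := hsys X Y hXY
  have hc0 : c (u X Y) ≠ 0 := by
    have := (hcb (u X Y)).1
    have hκ0 : (0:ℝ) < κ⁻¹ := inv_pos.mpr (lt_trans one_pos hκ)
    linarith
  -- Y-derivative
  have Hw := sliceY w Ω hΩ hw hXY
  have Hp := sliceY p Ω hΩ hp hXY
  have HA : HasDerivAt (fun Y' => (1 + Real.cos (w X Y')) * p X Y' / 4)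
      ((((0 + -Real.sin (w X Y) * pdY w X Y) * p X Y
        + (1 + Real.cos (w X Y)) * pdY p X Y)) / 4) Y :=
    (((hasDerivAt_const Y (1:ℝ)).add Hw.cos).mul Hp).div_const 4
  have hAval : pdY (fun a b => (1 + Real.cos (w a b)) * p a b / 4) X Y
      = (((0 + -Real.sin (w X Y) * pdY w X Y) * p X Y
        + (1 + Real.cos (w X Y)) * pdY p X Y)) / 4 := HA.deriv
  -- X-derivative
  have Hz := sliceX z Ω hΩ hz hXY
  have Hq := sliceX q Ω hΩ hq hXY
  have HB : HasDerivAt (fun X' => - ((1 + Real.cos (z X' Y)) * q X' Y / 4))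
      (- ((((0 + -Real.sin (z X Y) * pdX z X Y) * q X Y
        + (1 + Real.cos (z X Y)) * pdX q X Y)) / 4)) X :=
    ((((hasDerivAt_const X (1:ℝ)).add Hz.cos).mul Hq).div_const 4).neg
  have hBval : pdX (fun a b => - ((1 + Real.cos (z a b)) * q a b / 4)) X Y
      = - ((((0 + -Real.sin (z X Y) * pdX z X Y) * q X Y
        + (1 + Real.cos (z X Y)) * pdX q X Y)) / 4) := HB.deriv
  have key1 : pdY (fun a b => (1 + Real.cos (w a b)) * p a b / 4) X Y
      = deriv c (u X Y) * (p X Y * q X Y) / (32 * c (u X Y) ^ 2)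
          * (Real.sin (z X Y) - Real.sin (w X Y) + Real.sin (z X Y - w X Y)) := by
    rw [hAval, hw1, hp1, Real.sin_sub]
    field_simp
    ring
  refine ⟨key1, ?_⟩
  rw [key1, hBval, hz1, hq1, Real.sin_sub]
  field_simp
  ring
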